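/- arXiv:1804.06640 — 9 statements merged into one kernel-verified Lean document; each statement's English description precedes it below -/
import Mathlib

section
/- Let S be a right LCM monoid (a left cancellative monoid in which the intersection of two principal right ideals is either empty or again a principal right ideal). If a belongs to the core S_c and s, b in S satisfy aS ∩ sS = sbS, then b belongs to S_c. -/
variable {S : Type*}

/-- The principal right ideal `sS` of a monoid. -/
def rIdeal [Monoid S] (s : S) : Set S := {x | ∃ r : S, x = s * r}

/-- A right LCM monoid: left cancellative, and any intersection of two principal
right ideals is empty or again a principal right ideal. -/
def IsRightLCMMonoid (S : Type*) [Monoid S] : Prop :=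
  (∀ a b c : S, a * b = a * c → b = c) ∧
  (∀ s t : S, rIdeal s ∩ rIdeal t = (∅ : Set S) ∨ ∃ r : S, rIdeal s ∩ rIdeal t = rIdeal r)

/-- The core of a right LCM monoid. -/
def core (S : Type*) [Monoid S] : Set S := {a | ∀ s : S, (rIdeal a ∩ rIdeal s).Nonempty}

/-- Core equivalence: `s ∼ t` iff `s * a = t * b` for some core elements `a, b`. -/
def coreEquiv [Monoid S] (s t : S) : Prop :=
  ∃ a ∈ core S, ∃ b ∈ core S, s * a = t * b

theorem stmt0 [Monoid S] (hS : IsRightLCMMonoid S)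
    (a : S) (ha : a ∈ core S) (s b : S)
    (h : rIdeal a ∩ rIdeal s = rIdeal (s * b)) :
    b ∈ core S := by
  intro t
  obtain ⟨x, ⟨p, hp⟩, q, hq⟩ := ha (s * t)
  have hx : x ∈ rIdeal (s * b) := by
    rw [← h]
    exact ⟨⟨p, hp⟩, t * q, by rw [hq, mul_assoc]⟩
  obtain ⟨r, hr⟩ := hx
  refine ⟨t * q, ⟨r, ?_⟩, q, rfl⟩
  apply hS.1 s
  rw [← mul_assoc, ← hq, hr, mul_assoc]
end

section
/- Let S be a right LCM monoid and suppose s, t in S are core equivalent (i.e., there exist a, b in S_c with sa = tb). Then sS ∩ tS = saS for some a ∈ S_c. -/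
variable {S : Type*}

theorem stmt3 [Monoid S] (hS : IsRightLCMMonoid S)
    (s t : S) (h : coreEquiv s t) :
    ∃ a ∈ core S, rIdeal s ∩ rIdeal t = rIdeal (s * a) := by
  obtain ⟨hcancel, hlcm⟩ := hS
  obtain ⟨a, ha, b, hb, hab⟩ := h
  have hne : (rIdeal s ∩ rIdeal t).Nonempty := ⟨s * a, ⟨a, rfl⟩, ⟨b, hab⟩⟩
  rcases hlcm s t with h0 | ⟨r, hr⟩
  · rw [h0] at hne; exact absurd hne Set.not_nonempty_empty
  have hrmem : r ∈ rIdeal s ∩ rIdeal t := hr ▸ ⟨1, (mul_one r).symm⟩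
  obtain ⟨⟨c, hcr⟩, -⟩ := hrmem
  refine ⟨c, ?_, by rw [hr, hcr]⟩
  intro u
  obtain ⟨x, ⟨y, hy⟩, z, hz⟩ := ha u
  have hsx : s * x ∈ rIdeal s ∩ rIdeal t :=
    ⟨⟨x, rfl⟩, ⟨b * y, by rw [hy, ← mul_assoc, hab, mul_assoc]⟩⟩
  rw [hr] at hsx
  obtain ⟨w, hw⟩ := hsx
  have hx : x = c * w := hcancel s _ _ (by rw [hw, hcr, mul_assoc])
  exact ⟨c * w, ⟨w, rfl⟩, ⟨z, by rw [← hx, hz]⟩⟩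
end

section
/- Let S be a right LCM monoid and s, t in S. Then s ∼ t (there exist a,b in S_c with sa = tb) holds if and only if for every r in S, sS ∩ rS ≠ ∅ ⇔ tS ∩ rS ≠ ∅. -/
variable {S : Type*}

theorem stmt4 [Monoid S] (hS : IsRightLCMMonoid S) (s t : S) :
    coreEquiv s t ↔
      ∀ r : S, (rIdeal s ∩ rIdeal r).Nonempty ↔ (rIdeal t ∩ rIdeal r).Nonempty := by
  obtain ⟨hcanc, hlcm⟩ := hS
  -- helper: if `a` is core and `s*a = t*b`, then `sS ∩ rS ≠ ∅ → tS ∩ rS ≠ ∅`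
  have aux : ∀ s t a b : S, a ∈ core S → s * a = t * b → ∀ r : S,
      (rIdeal s ∩ rIdeal r).Nonempty → (rIdeal t ∩ rIdeal r).Nonempty := by
    rintro s t a b ha hab r ⟨w, ⟨x, hx⟩, ⟨y, hy⟩⟩
    obtain ⟨v, ⟨p, hp⟩, ⟨q, hq⟩⟩ := ha x
    refine ⟨t * (b * p), ⟨b * p, rfl⟩, ⟨y * q, ?_⟩⟩
    calc t * (b * p) = t * b * p := (mul_assoc _ _ _).symm
      _ = s * a * p := by rw [hab]
      _ = s * (a * p) := mul_assoc _ _ _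
      _ = s * (x * q) := by rw [hp.symm.trans hq]
      _ = s * x * q := (mul_assoc _ _ _).symm
      _ = r * y * q := by rw [← hx, hy]
      _ = r * (y * q) := mul_assoc _ _ _
  constructor
  · rintro ⟨a, ha, b, hb, hab⟩ r
    exact ⟨aux s t a b ha hab r, aux t s b a hb hab.symm r⟩
  · intro h
    have hst : (rIdeal s ∩ rIdeal t).Nonempty :=
      (h t).mpr ⟨t, ⟨1, (mul_one t).symm⟩, ⟨1, (mul_one t).symm⟩⟩
    rcases hlcm s t with hE | ⟨z, hz⟩
    · exact absurd hE hst.ne_empty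
    have hzmem : z ∈ rIdeal s ∩ rIdeal t := hz ▸ ⟨1, (mul_one z).symm⟩
    obtain ⟨⟨a, hza⟩, ⟨b, hzb⟩⟩ := hzmem
    refine ⟨a, ?_, b, ?_, hza.symm.trans hzb⟩
    · -- a ∈ core S
      intro c
      obtain ⟨w, ⟨x, hwx⟩, ⟨y, hwy⟩⟩ :=
        (h (s * c)).mp ⟨s * c, ⟨c, rfl⟩, ⟨1, (mul_one _).symm⟩⟩
      -- w = t*x and w = (s*c)*y, so w ∈ sS ∩ tS = zS
      have hw : w ∈ rIdeal z := hz ▸ ⟨⟨c * y, by rw [hwy, mul_assoc]⟩, ⟨x, hwx⟩⟩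
      obtain ⟨u, hwu⟩ := hw
      have : s * (a * u) = s * (c * y) := by
        rw [← mul_assoc, ← hza, ← hwu, hwy, mul_assoc]
      exact ⟨a * u, ⟨u, rfl⟩, ⟨y, hcanc s _ _ this⟩⟩
    · -- b ∈ core S
      intro c
      obtain ⟨w, ⟨x, hwx⟩, ⟨y, hwy⟩⟩ :=
        (h (t * c)).mpr ⟨t * c, ⟨c, rfl⟩, ⟨1, (mul_one _).symm⟩⟩
      -- w = s*x and w = (t*c)*y, so w ∈ sS ∩ tS = zS
      have hw : w ∈ rIdeal z := hz ▸ ⟨⟨x, hwx⟩, ⟨c * y, by rw [hwy, mul_assoc]⟩⟩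
      obtain ⟨u, hwu⟩ := hw
      have : t * (b * u) = t * (c * y) := by
        rw [← mul_assoc, ← hzb, ← hwu, hwy, mul_assoc]
      exact ⟨b * u, ⟨u, rfl⟩, ⟨y, hcanc t _ _ this⟩⟩
end

section
/- Let N be a multiplicative submonoid of the positive natural numbers (under multiplication) that is closed under least common multiples of its elements (in the sense that for m, n in N, the set mN ∩ nN is a principal ideal kN of N for some k in N). If m and n are distinct irreducible elements of N, then mN ∩ nN = mnN. -/
/-- The "ideal" `mN` of a submonoid `N ⊆ ℕ^×`. -/
def pideal (N : Submonoid ℕ+) (m : ℕ+) : Set ℕ+ := {x | ∃ k ∈ N, x = m * k}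

/-- An LCM submonoid of `ℕ^×`: every `mN ∩ nN` is of the form `kN`. -/
def IsLCMSubmonoid (N : Submonoid ℕ+) : Prop :=
  ∀ m ∈ N, ∀ n ∈ N, ∃ k ∈ N, pideal N m ∩ pideal N n = pideal N k

/-- Irreducible elements of a submonoid `N ⊆ ℕ^×`. -/
def IrrIn (N : Submonoid ℕ+) (n : ℕ+) : Prop :=
  n ∈ N ∧ n ≠ 1 ∧ ∀ k ∈ N, ∀ l ∈ N, n = k * l → k = 1 ∨ l = 1

theorem stmt6 (N : Submonoid ℕ+) (hN : IsLCMSubmonoid N)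
    (m n : ℕ+) (hm : IrrIn N m) (hn : IrrIn N n) (hmn : m ≠ n) :
    pideal N m ∩ pideal N n = pideal N (m * n) := by
  obtain ⟨hmN, hm1, hmirr⟩ := hm
  obtain ⟨hnN, hn1, hnirr⟩ := hn
  obtain ⟨k, hkN, hk⟩ := hN m hmN n hnN
  -- k ∈ kN
  have hkmem : k ∈ pideal N k := ⟨1, N.one_mem, (mul_one k).symm⟩
  rw [← hk] at hkmem
  obtain ⟨⟨a, haN, hka⟩, ⟨b, hbN, hkb⟩⟩ := hkmem
  -- mn ∈ mN ∩ nN = kN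
  have hmnmem : (m * n : ℕ+) ∈ pideal N k := by
    rw [← hk]
    exact ⟨⟨n, hnN, rfl⟩, ⟨m, hmN, mul_comm m n⟩⟩
  obtain ⟨c, hcN, hc⟩ := hmnmem
  have hn_eq : n = a * c := by
    have : m * n = m * (a * c) := by rw [hc, hka, mul_assoc]
    exact mul_left_cancel this
  rcases hnirr a haN c hcN hn_eq with ha1 | hc1
  · -- a = 1, so k = m, but k = n * b, contradiction
    exfalso
    have hkm : k = m := by rw [hka, ha1, mul_one]
    rcases hmirr n hnN b hbN (hkm ▸ hkb) with h | h
    · exact hn1 h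
    · apply hmn; rw [← hkm, hkb, h, mul_one]
  · rw [hk, show m * n = k by rw [hc, hc1, mul_one]]
end

section
/- Every LCM subsemigroup N of the multiplicative monoid of positive natural numbers is freely generated by its set of irreducible elements: every element of N admits a factorization into irreducibles of N, and this factorization is unique up to permutation of the factors. -/
/-!
Irreducibles of an LCM submonoid are prime. Let `k` generate `pN ∩ aN` and write `pa = kg`;
then `p = tg` with `k = at`, so either `t = 1` and `p` divides `a`, or `g = 1` and `k = pa`,
in which case `p ∣ ab` and `a ∣ ab` give `pa ∣ ab`, i.e. `p ∣ b`. Uniqueness of factorizations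
then follows by cancelling a common irreducible factor, and existence holds in every submonoid
by induction on the size of the element.
-/

section

variable {N : Submonoid ℕ+}

theorem mul_mem_pideal (m : ℕ+) {k : ℕ+} (hk : k ∈ N) : m * k ∈ pideal N m := ⟨k, hk, rfl⟩

theorem self_mem_pideal (m : ℕ+) : m ∈ pideal N m := by
  simpa using mul_mem_pideal m N.one_mem

theorem IrrIn.one_notMem_pideal {p : ℕ+} (hp : IrrIn N p) : 1 ∉ pideal N p :=
  fun ⟨k, _, hk⟩ => hp.2.1 ((PNat.dvd_one_iff p).mp ⟨k, hk⟩)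

theorem IrrIn.eq_of_mem_pideal {p q : ℕ+} (hp : IrrIn N p) (hq : IrrIn N q)
    (h : q ∈ pideal N p) : q = p := by
  obtain ⟨k, hk, rfl⟩ := h
  rcases hq.2.2 p hp.1 k hk rfl with hp1 | rfl
  · exact absurd hp1 hp.2.1
  · exact mul_one p

theorem IsLCMSubmonoid.mem_pideal_or_mem_pideal_of_mul_mem (hN : IsLCMSubmonoid N)
    {p a b : ℕ+} (hp : IrrIn N p) (ha : a ∈ N) (hb : b ∈ N) (hab : a * b ∈ pideal N p) :
    a ∈ pideal N p ∨ b ∈ pideal N p := by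
  obtain ⟨k, hk, hlcm⟩ := hN p hp.1 a ha
  obtain ⟨⟨s, hs, rfl⟩, t, ht, hst⟩ : k ∈ pideal N p ∩ pideal N a :=
    hlcm ▸ self_mem_pideal _
  obtain ⟨g, hg, hpa⟩ : p * a ∈ pideal N (p * s) :=
    hlcm ▸ ⟨mul_mem_pideal p ha, mul_comm a p ▸ mul_mem_pideal a hp.1⟩
  have ha_eq : a = s * g := mul_left_cancel (a := p) (by rw [hpa, mul_assoc])
  have hp_eq : p = t * g := mul_left_cancel (a := a) (by rw [mul_comm a p, hpa, hst, mul_assoc])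
  rcases hp.2.2 t ht g hg hp_eq with rfl | rfl
  · -- the lcm of `p` and `a` is `a`
    left
    rw [one_mul] at hp_eq
    exact ⟨s, hs, by rw [ha_eq, hp_eq, mul_comm]⟩
  · -- the lcm of `p` and `a` is `p * a`, and it divides `a * b`
    right
    rw [mul_one] at ha_eq
    subst ha_eq
    obtain ⟨w, hw, habw⟩ : a * b ∈ pideal N (p * a) :=
      hlcm ▸ ⟨hab, mul_mem_pideal a hb⟩
    exact ⟨w, hw, mul_left_cancel (a := a) (by rw [habw, mul_comm p a, mul_assoc])⟩

theorem IsLCMSubmonoid.exists_mem_pideal_of_prod_mem (hN : IsLCMSubmonoid N) {p : ℕ+}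
    (hp : IrrIn N p) {l : List ℕ+} (hl : ∀ q ∈ l, q ∈ N) (h : l.prod ∈ pideal N p) :
    ∃ q ∈ l, q ∈ pideal N p := by
  induction l with
  | nil => exact absurd h hp.one_notMem_pideal
  | cons q t ih =>
    simp only [List.mem_cons, forall_eq_or_imp] at hl
    rw [List.prod_cons] at h
    rcases hN.mem_pideal_or_mem_pideal_of_mul_mem hp hl.1 (list_prod_mem hl.2) h with hq | ht
    · exact ⟨q, List.mem_cons_self, hq⟩
    · obtain ⟨q', hq', hq'p⟩ := ih hl.2 ht
      exact ⟨q', List.mem_cons_of_mem q hq', hq'p⟩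

theorem IsLCMSubmonoid.perm_of_prod_eq_prod (hN : IsLCMSubmonoid N) {l₁ l₂ : List ℕ+}
    (h₁ : ∀ p ∈ l₁, IrrIn N p) (h₂ : ∀ p ∈ l₂, IrrIn N p) (h : l₁.prod = l₂.prod) :
    l₁.Perm l₂ := by
  induction l₁ generalizing l₂ with
  | nil =>
    cases l₂ with
    | nil => rfl
    | cons q t =>
      have hq : IrrIn N q := h₂ q List.mem_cons_self
      exact absurd ⟨t.prod, list_prod_mem fun x hx => (h₂ x (List.mem_cons_of_mem q hx)).1, h⟩
        hq.one_notMem_pideal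
  | cons p t ih =>
    simp only [List.mem_cons, forall_eq_or_imp] at h₁
    obtain ⟨q, hq, hqp⟩ := hN.exists_mem_pideal_of_prod_mem h₁.1 (fun x hx => (h₂ x hx).1)
      (h ▸ mul_mem_pideal p (list_prod_mem fun x hx => (h₁.2 x hx).1))
    obtain rfl : p = q := (h₁.1.eq_of_mem_pideal (h₂ q hq) hqp).symm
    have hperm : l₂.Perm (p :: l₂.erase p) := List.perm_cons_erase hq
    have ht : t.prod = (l₂.erase p).prod := by
      rw [hperm.prod_eq, List.prod_cons, List.prod_cons] at h
      exact mul_left_cancel h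
    exact ((ih h₁.2 (fun x hx => h₂ x (List.mem_of_mem_erase hx)) ht).cons p).trans hperm.symm

theorem exists_irrIn_factorization {x : ℕ+} (hx : x ∈ N) :
    ∃ l : List ℕ+, (∀ p ∈ l, IrrIn N p) ∧ l.prod = x := by
  induction x using WellFoundedLT.induction with
  | _ x ih =>
  by_cases hx1 : x = 1
  · exact ⟨[], by simp, by simp [hx1]⟩
  by_cases hirr : IrrIn N x
  · exact ⟨[x], by simpa using hirr, by simp⟩
  obtain ⟨k, hk, l, hl, rfl, hk1, hl1⟩ : ∃ k ∈ N, ∃ l ∈ N, x = k * l ∧ k ≠ 1 ∧ l ≠ 1 := by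
    simpa [IrrIn, hx, hx1] using hirr
  obtain ⟨lk, hlk, rfl⟩ := ih k (lt_mul_of_one_lt_right' k (one_lt_iff_ne_one.mpr hl1)) hk
  obtain ⟨ll, hll, rfl⟩ := ih l (lt_mul_of_one_lt_left' l (one_lt_iff_ne_one.mpr hk1)) hl
  refine ⟨lk ++ ll, ?_, List.prod_append⟩
  simpa [or_imp, forall_and] using ⟨hlk, hll⟩

end

theorem stmt7 (N : Submonoid ℕ+) (hN : IsLCMSubmonoid N) :
    ∀ x ∈ N,
      (∃ l : List ℕ+, (∀ p ∈ l, IrrIn N p) ∧ l.prod = x) ∧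
      (∀ l₁ l₂ : List ℕ+, (∀ p ∈ l₁, IrrIn N p) → (∀ p ∈ l₂, IrrIn N p) →
        l₁.prod = x → l₂.prod = x → l₁.Perm l₂) := fun _ hx =>
  ⟨exists_irrIn_factorization hx,
    fun _ _ h₁ h₂ hx₁ hx₂ => hN.perm_of_prod_eq_prod h₁ h₂ (hx₁.trans hx₂.symm)⟩
end

section
/- Let N be a submonoid of the positive natural numbers under multiplication such that for all m, n ∈ N there is k ∈ N with mN ∩ nN = kN. Then every irreducible element of N is prime in N: if p is irreducible and p divides a product of elements of N within N, then p divides one of the factors within N. -/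
theorem stmt8 (N : Submonoid ℕ+) (hN : IsLCMSubmonoid N)
    (p : ℕ+) (hp : IrrIn N p) :
    ∀ x ∈ N, ∀ y ∈ N, x * y ∈ pideal N p → x ∈ pideal N p ∨ y ∈ pideal N p := by
  obtain ⟨hpN, hp1, hirr⟩ := hp
  intro x hx y hy hxy
  obtain ⟨k, hkN, hk⟩ := hN p hpN x hx
  -- p*x ∈ pN ∩ xN
  have hpx : (p * x : ℕ+) ∈ pideal N k := by
    rw [← hk]
    exact ⟨⟨x, hx, rfl⟩, ⟨p, hpN, mul_comm p x⟩⟩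
  -- k ∈ pN ∩ xN
  have hkmem : (k : ℕ+) ∈ pideal N p ∩ pideal N x := by
    rw [hk]; exact ⟨1, N.one_mem, (mul_one k).symm⟩
  obtain ⟨⟨a, haN, hka⟩, ⟨b, hbN, hkb⟩⟩ := hkmem
  obtain ⟨d, hdN, hpxd⟩ := hpx
  -- x*y ∈ pN ∩ xN = kN
  have hxyk : (x * y : ℕ+) ∈ pideal N k := by
    rw [← hk]
    obtain ⟨e, heN, he⟩ := hxy
    exact ⟨⟨e, heN, he⟩, ⟨y, hy, rfl⟩⟩
  obtain ⟨c, hcN, hxyc⟩ := hxyk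
  -- p*x = k*d = x*b*d  ⇒ p = b*d
  have hpbd : p = b * d := by
    have : x * p = x * (b * d) := by
      rw [mul_comm x p, hpxd, hkb]; ring
    exact mul_left_cancel this
  rcases hirr b hbN d hdN hpbd with hb1 | hd1
  · -- b = 1 ⇒ k = x ⇒ x = p*a
    left
    refine ⟨a, haN, ?_⟩
    rw [← hka, hkb, hb1, mul_one]
  · -- d = 1 ⇒ k = p*x ⇒ x*y = p*x*c ⇒ y = p*c
    right
    refine ⟨c, hcN, ?_⟩
    have hk' : k = p * x := by rw [hd1, mul_one] at hpxd; exact hpxd.symm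
    have : x * y = x * (p * c) := by rw [hxyc, hk']; ring
    exact mul_left_cancel this
end

section
/- Let S be a right LCM monoid. Left multiplication by core elements induces a well-defined action of S_c on the quotient S/∼ by bijections: for each a ∈ S_c, the map [s] ↦ [as] is well defined and bijective on S/∼. -/
variable {S : Type*}

theorem stmt11 [Monoid S] (hS : IsRightLCMMonoid S) :
    ∀ a ∈ core S,
      (∀ s t : S, coreEquiv s t → coreEquiv (a * s) (a * t)) ∧
      (∀ s t : S, coreEquiv (a * s) (a * t) → coreEquiv s t) ∧
      (∀ s : S, ∃ t : S, coreEquiv (a * t) s) := by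
  intro a ha
  have hone : (1 : S) ∈ core S := by
    intro s
    exact ⟨s, ⟨s, (one_mul s).symm⟩, ⟨1, (mul_one s).symm⟩⟩
  refine ⟨?_, ?_, ?_⟩
  · rintro s t ⟨c, hc, d, hd, h⟩
    exact ⟨c, hc, d, hd, by rw [mul_assoc, h, mul_assoc]⟩
  · rintro s t ⟨c, hc, d, hd, h⟩
    exact ⟨c, hc, d, hd, hS.1 a _ _ (by rw [← mul_assoc, h, mul_assoc])⟩
  · intro s
    rcases hS.2 a s with hemp | ⟨r, hr⟩
    · exact absurd (ha s) (by rw [hemp]; exact Set.not_nonempty_empty)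
    · have hrmem : r ∈ rIdeal a ∩ rIdeal s := by
        rw [hr]; exact ⟨1, (mul_one r).symm⟩
      obtain ⟨⟨u, hu⟩, ⟨v, hv⟩⟩ := hrmem
      refine ⟨u, 1, hone, v, ?_, by rw [mul_one, ← hu, hv]⟩
      intro w
      obtain ⟨x, ⟨p, hp⟩, ⟨q, hq⟩⟩ := ha (s * w)
      have hx : x ∈ rIdeal a ∩ rIdeal s :=
        ⟨⟨p, hp⟩, ⟨w * q, by rw [hq, mul_assoc]⟩⟩
      rw [hr] at hx
      obtain ⟨y, hy⟩ := hx
      have h1 : s * (v * y) = s * (w * q) := by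
        rw [← mul_assoc, ← hv, ← hy, hq, mul_assoc]
      exact ⟨v * y, ⟨y, rfl⟩, ⟨q, hS.1 s _ _ h1⟩⟩
end

section
/- Let S be a right LCM monoid. For a ∈ S_c and s ∈ S, the element as is noncore irreducible if and only if s is noncore irreducible. (Hence left multiplication by core elements preserves the set I(S)/∼ of core-equivalence classes of noncore irreducibles.) -/
variable {S : Type*}

/-- Noncore irreducible elements of a right LCM monoid. -/
def NoncoreIrred [Monoid S] (s : S) : Prop :=
  s ∉ core S ∧ ∀ a ∈ core S, ∀ t r : S, s * a = t * r → t ∈ core S ∨ r ∈ core S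

lemma core_mul [Monoid S] {a b : S} (ha : a ∈ core S) (hb : b ∈ core S) :
    a * b ∈ core S := by
  intro s
  obtain ⟨x, ⟨p, hp⟩, ⟨q, hq⟩⟩ := ha s
  obtain ⟨y, ⟨u, hu⟩, ⟨v, hv⟩⟩ := hb p
  exact ⟨a * b * u, ⟨u, rfl⟩, ⟨q * v, by
    rw [mul_assoc, ← hu, hv, ← mul_assoc, ← hp, hq, mul_assoc]⟩⟩

lemma core_of_mul_left [Monoid S] {x y : S} (h : x * y ∈ core S) : x ∈ core S := by
  intro s
  obtain ⟨z, ⟨p, hp⟩, hs⟩ := h s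
  exact ⟨z, ⟨y * p, by rw [hp, mul_assoc]⟩, hs⟩

lemma core_of_mul_right [Monoid S] (hS : IsRightLCMMonoid S) {a b : S}
    (ha : a ∈ core S) (h : a * b ∈ core S) : b ∈ core S := by
  intro s
  obtain ⟨z, ⟨p, hp⟩, ⟨q, hq⟩⟩ := h (a * s)
  have : b * p = s * q := hS.1 a _ _ (by rw [← mul_assoc, ← hp, hq, ← mul_assoc])
  exact ⟨b * p, ⟨p, rfl⟩, ⟨q, this⟩⟩

theorem stmt12 [Monoid S] (hS : IsRightLCMMonoid S)
    (a : S) (ha : a ∈ core S) (s : S) :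
    NoncoreIrred (a * s) ↔ NoncoreIrred s := by
  constructor
  · rintro ⟨hnc, hirr⟩
    refine ⟨fun hs => hnc (core_mul ha hs), ?_⟩
    intro c hc t r hst
    rcases hirr c hc (a * t) r (by rw [mul_assoc, hst, mul_assoc]) with h | h
    · exact Or.inl (core_of_mul_right hS ha h)
    · exact Or.inr h
  · rintro ⟨hnc, hirr⟩
    refine ⟨fun h => hnc (core_of_mul_right hS ha h), ?_⟩
    intro c hc t r hst
    -- a*s*c = t*r, so aS ∩ tS is nonempty
    have hne : (rIdeal a ∩ rIdeal t).Nonempty :=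
      ⟨a * (s * c), ⟨s * c, rfl⟩, ⟨r, by rw [← hst, mul_assoc]⟩⟩
    rcases hS.2 a t with hemp | ⟨w, hw⟩
    · rw [hemp] at hne; exact absurd hne (by simp)
    rw [hw] at hne
    have hmem : a * (s * c) ∈ rIdeal w := by
      rw [← hw]; exact ⟨⟨s * c, rfl⟩, ⟨r, by rw [← hst, mul_assoc]⟩⟩
    obtain ⟨u, hu⟩ := hmem
    have hwmem : w ∈ rIdeal a ∩ rIdeal t := by rw [hw]; exact ⟨1, (mul_one w).symm⟩
    obtain ⟨⟨p, hpw⟩, ⟨q, hqw⟩⟩ := hwmem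
    -- q is core: for any x, qS ∩ xS nonempty
    have hq : q ∈ core S := by
      intro x
      obtain ⟨z, ⟨m, hm⟩, ⟨n, hn⟩⟩ := ha (t * x)
      have hz : z ∈ rIdeal w := by
        rw [← hw]; exact ⟨⟨m, hm⟩, ⟨x * n, by rw [hn, mul_assoc]⟩⟩
      obtain ⟨k, hk⟩ := hz
      have : x * n = q * k := hS.1 t _ _ (by
        rw [← mul_assoc, ← hn, hk, hqw, mul_assoc])
      exact ⟨q * k, ⟨k, rfl⟩, ⟨n, this.symm⟩⟩
    -- p * u = s * c
    have hpu : p * u = s * c := hS.1 a _ _ (by rw [← mul_assoc, ← hpw, ← hu])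
    rcases hirr c hc p u hpu.symm with h | h
    · -- p core, so w = a * p core, w = t * q gives t core
      exact Or.inl (core_of_mul_left (x := t) (y := q) (by
        rw [← hqw, hpw]; exact core_mul ha h))
    · -- u core, r = q * u
      have hr : r = q * u := hS.1 t _ _ (by
        rw [← hst, mul_assoc, hu, hqw, mul_assoc])
      exact Or.inr (hr ▸ core_mul hq h)
end

section
/- Let S = ℕ ⋊ ℕ^× be the ax+b-monoid over the natural numbers, with multiplication (m,p)(n,q) = (m + pn, pq). An element (m, p) of S is noncore irreducible if and only if p is a prime number. -/
/-- Multiplication of the ax+b-monoid `ℕ ⋊ ℕ^×`: `(m,p)(n,q) = (m + pn, pq)`. -/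
def axbMul (p q : ℕ × ℕ+) : ℕ × ℕ+ := (p.1 + (p.2 : ℕ) * q.1, p.2 * q.2)

/-- The core of `ℕ ⋊ ℕ^×`, defined via nonempty intersections of principal right ideals. -/
def axbCore : Set (ℕ × ℕ+) :=
  {s | ∀ t : ℕ × ℕ+, ∃ u v : ℕ × ℕ+, axbMul s u = axbMul t v}

/-! An element lies in the core exactly when its multiplicative part is `1`, and the
multiplicative part `ℕ × ℕ+ → ℕ+` is a homomorphism. So noncore irreducibility of `(m, p)` only
sees the factorisations of `p` in `ℕ+`: it is irreducibility, i.e. primality, of `p`. -/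

theorem PNat.prime_iff_eq_mul (p : ℕ+) :
    p.Prime ↔ p ≠ 1 ∧ ∀ a b : ℕ+, p = a * b → a = 1 ∨ b = 1 := by
  constructor
  · intro hp
    refine ⟨hp.ne_one, fun a b hab => ?_⟩
    rcases (PNat.dvd_prime hp).mp ⟨b, hab⟩ with ha | ha
    · exact Or.inl ha
    · exact Or.inr (mul_eq_left.mp (ha ▸ hab).symm)
  · rintro ⟨hp1, hfac⟩
    refine Nat.prime_def.mpr ⟨?_, fun a ⟨b, hab⟩ => ?_⟩
    · have : (p : ℕ) ≠ 1 := fun h => hp1 (PNat.coe_eq_one_iff.mp h)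
      have := p.pos
      omega
    · have ha : 0 < a := Nat.pos_of_mul_pos_right (hab ▸ p.pos)
      have hb : 0 < b := Nat.pos_of_mul_pos_left (hab ▸ p.pos)
      rcases hfac ⟨a, ha⟩ ⟨b, hb⟩ (PNat.eq hab) with h | h
      · exact Or.inl (congrArg PNat.val h)
      · have hb1 : b = 1 := congrArg PNat.val h
        exact Or.inr (by rw [hab, hb1, mul_one])

@[simp]
theorem axbMul_snd (s t : ℕ × ℕ+) : (axbMul s t).2 = s.2 * t.2 := rfl

theorem mem_axbCore_iff (s : ℕ × ℕ+) : s ∈ axbCore ↔ s.2 = 1 := by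
  constructor
  · intro h
    obtain ⟨u, v, huv⟩ := h (s.1 + 1, s.2)
    have hfst : s.1 + (s.2 : ℕ) * u.1 = s.1 + 1 + (s.2 : ℕ) * v.1 := congrArg Prod.fst huv
    have hdvd : (s.2 : ℕ) ∣ 1 := by
      have : (s.2 : ℕ) * u.1 - (s.2 : ℕ) * v.1 = 1 := by omega
      exact this ▸ Nat.dvd_sub (dvd_mul_right _ _) (dvd_mul_right _ _)
    exact PNat.coe_eq_one_iff.mp (Nat.eq_one_of_dvd_one hdvd)
  · intro h t
    -- `(s.1, 1) (x, q) = (t.1, q) (s.1, 1)` with `x = t.1 + q s.1 - s.1`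
    refine ⟨(t.1 + (t.2 : ℕ) * s.1 - s.1, t.2), (s.1, 1), ?_⟩
    have hle : s.1 ≤ (t.2 : ℕ) * s.1 := Nat.le_mul_of_pos_left _ t.2.pos
    simp only [axbMul, h, PNat.one_coe, one_mul, mul_one, Prod.mk.injEq, and_true]
    omega

theorem axbMul_core_factor_iff (s : ℕ × ℕ+) :
    (∀ a ∈ axbCore, ∀ t r : ℕ × ℕ+, axbMul s a = axbMul t r → t ∈ axbCore ∨ r ∈ axbCore) ↔
      ∀ a b : ℕ+, s.2 = a * b → a = 1 ∨ b = 1 := by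
  simp only [mem_axbCore_iff]
  constructor
  · intro h a b hab
    exact h (0, 1) rfl (s.1, a) (0, b) (by simp [axbMul, hab])
  · intro h a ha t r hsa
    have := congrArg Prod.snd hsa
    rw [axbMul_snd, axbMul_snd, ha, mul_one] at this
    exact h t.2 r.2 this

theorem stmt19 (m : ℕ) (p : ℕ+) :
    ((m, p) ∉ axbCore ∧
      ∀ a ∈ axbCore, ∀ t r : ℕ × ℕ+,
        axbMul (m, p) a = axbMul t r → t ∈ axbCore ∨ r ∈ axbCore) ↔
    Nat.Prime (p : ℕ) := by
  rw [axbMul_core_factor_iff, mem_axbCore_iff]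
  exact (PNat.prime_iff_eq_mul p).symm
end
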